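/- arXiv:2209.15372 — 2 statements merged into one kernel-verified Lean document; each statement's English description precedes it below -/
import Mathlib

section
/- Let Y_n^L and Y_n^R be 2N×2N block matrices defined from monic biorthogonal matrix polynomials P_n^L, P_n^R and second kind functions Q_n^L, Q_n^R by Y_n^L = [[P_n^L, Q_n^L], [-C_{n-1}P_{n-1}^L, -C_{n-1}Q_{n-1}^L]] and Y_n^R = [[P_n^R, -P_{n-1}^R C_{n-1}], [Q_n^R, -Q_{n-1}^R C_{n-1}]]. Then (Y_n^L)^{-1} = J Y_n^R J^{-1}, where J = [[0, I_N], [-I_N, 0]]; equivalently Y_n^L · (J Y_n^R J^{-1}) = I_{2N}. -/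
open Matrix

/-- Given the Liouville/Christoffel–Darboux identities equivalent to biorthogonality
for monic biorthogonal matrix polynomials `P` and second kind functions `Q`, the block
matrices `Y^L` and `Y^R` satisfy `(Y^L)⁻¹ = J Y^R J⁻¹`, i.e. `Y^L ⬝ (J Y^R J⁻¹) = I`. -/
theorem stmt2 (N : ℕ)
    (PL QL PLm QLm PR QR PRm QRm Cm : Matrix (Fin N) (Fin N) ℂ)
    -- Liouville identities (equivalent to biorthogonality):
    (hLiou1 : PL * QR = QL * PR)
    (hLiou1' : PLm * QRm = QLm * PRm)
    (hLiou2 : (QL * PRm - PL * QRm) * Cm = 1)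
    (hLiou3 : Cm * (PLm * QR - QLm * PR) = 1) :
    let YL : Matrix (Fin N ⊕ Fin N) (Fin N ⊕ Fin N) ℂ :=
      Matrix.fromBlocks PL QL (-(Cm * PLm)) (-(Cm * QLm))
    let YR : Matrix (Fin N ⊕ Fin N) (Fin N ⊕ Fin N) ℂ :=
      Matrix.fromBlocks PR (-(PRm * Cm)) QR (-(QRm * Cm))
    let J : Matrix (Fin N ⊕ Fin N) (Fin N ⊕ Fin N) ℂ :=
      Matrix.fromBlocks 0 1 (-1) 0
    YL * (J * YR * J⁻¹) = 1 ∧ YL⁻¹ = J * YR * J⁻¹ := by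
  intro YL YR J
  have hJinv : J⁻¹ = Matrix.fromBlocks 0 (-1) 1 0 := by
    apply Matrix.inv_eq_right_inv
    simp [J, Matrix.fromBlocks_multiply, ← Matrix.fromBlocks_one]
  have key : YL * (J * YR * J⁻¹) = 1 := by
    have h1 : PL * -QR + QL * PR = 0 := by
      rw [mul_neg, hLiou1]; exact neg_add_cancel _
    have h2 : PL * -(QRm * Cm) + QL * (PRm * Cm) = 1 := by
      rw [← hLiou2]; noncomm_ring
    have h3 : -(Cm * PLm) * -(QRm * Cm) + -(Cm * QLm) * (PRm * Cm) = 0 := by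
      have : Cm * (PLm * QRm) * Cm - Cm * (QLm * PRm) * Cm = 0 := by
        rw [hLiou1']; exact sub_self _
      calc -(Cm * PLm) * -(QRm * Cm) + -(Cm * QLm) * (PRm * Cm)
          = Cm * (PLm * QRm) * Cm - Cm * (QLm * PRm) * Cm := by noncomm_ring
        _ = 0 := this
    have h4 : -(Cm * PLm) * -QR + -(Cm * QLm) * PR = 1 := by
      rw [← hLiou3]; noncomm_ring
    rw [hJinv]
    simp only [YL, YR, J, Matrix.fromBlocks_multiply, mul_zero, zero_mul, mul_one, one_mul,
      neg_mul, mul_neg, neg_neg, zero_add, add_zero, neg_zero, mul_neg_one]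
    rw [← Matrix.fromBlocks_one, Matrix.fromBlocks_inj]
    refine ⟨?_, ?_, ?_, ?_⟩
    · simpa [mul_neg, neg_mul, mul_assoc] using h2
    · simpa [mul_neg, neg_mul, mul_assoc] using h1
    · simpa [mul_neg, neg_mul, mul_assoc] using h3
    · simpa [mul_neg, neg_mul, mul_assoc] using h4
  exact ⟨key, Matrix.inv_eq_right_inv key⟩
end

section
/- Let f : (0,1) → ℂ be continuous with ∫₀¹ |f(t)| dt < ∞, and suppose t ↦ t(1-t)f(t) is differentiable with t(1-t)f(t) → 0 as t → 0⁺ and t → 1⁻, and t ↦ t(1-t)f'(t) integrable. Then for z ∉ [0,1], z(1-z) d/dz ∫₀¹ f(t)/(t-z) dt = −∫₀¹ f(t) dt + ∫₀¹ t(1-t)f'(t)/(t-z) dt. -/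
/-!
Differentiating under the integral sign gives `F'(z) = ∫₀¹ f(t)/(t-z)² dt`, the integrand being
dominated by `|f|/δ²` for `z` at distance `δ` from `[0,1]`. Splitting
`z(1-z) = (t-z)(t+z-1) + t(1-t)` turns `z(1-z) f(t)/(t-z)²` into `-f(t) + t(1-t)f'(t)/(t-z)`
minus the derivative of `t(1-t)f(t)/(t-z)`, whose integral vanishes by the boundary conditions.
-/

open MeasureTheory intervalIntegral
open Set Filter Metric Topology

theorem IsClosed.exists_pos_forall_mem_ball_le_dist {X : Type*} [PseudoMetricSpace X]
    {K : Set X} (hK : IsClosed K) {z : X} (hz : z ∉ K) :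
    ∃ δ > 0, ∀ w ∈ ball z δ, ∀ k ∈ K, δ ≤ dist k w := by
  obtain ⟨r, hr, hball⟩ := Metric.isOpen_iff.1 hK.isOpen_compl z hz
  refine ⟨r / 2, half_pos hr, fun w hw k hk => ?_⟩
  have hkz : r ≤ dist k z := not_lt.1 fun h => hball (mem_ball.2 h) hk
  linarith [dist_triangle k w z, mem_ball.1 hw]

theorem IntervalIntegrable.div_continuousOn {𝕜 : Type*} [NormedDivisionRing 𝕜]
    {f g : ℝ → 𝕜} {a b : ℝ} {μ : Measure ℝ} (hf : IntervalIntegrable f μ a b)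
    (hg : ContinuousOn g (uIcc a b)) (hg0 : ∀ t ∈ uIcc a b, g t ≠ 0) :
    IntervalIntegrable (fun t => f t / g t) μ a b := by
  simpa only [div_eq_mul_inv] using
    hf.mul_continuousOn (g := fun t => (g t)⁻¹) (hg.inv₀ hg0)

theorem hasDerivAt_integral_div_ofReal_sub {f : ℝ → ℂ} {a b : ℝ} {μ : Measure ℝ}
    (hf : IntervalIntegrable f μ a b) {z : ℂ} (hz : ∀ t ∈ uIcc a b, (t : ℂ) ≠ z) :
    HasDerivAt (fun w : ℂ => ∫ t in a..b, f t / ((t : ℂ) - w) ∂μ)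
      (∫ t in a..b, f t / ((t : ℂ) - z) ^ 2 ∂μ) z := by
  have hK : IsClosed ((↑) '' uIcc a b : Set ℂ) :=
    (isCompact_uIcc.image Complex.continuous_ofReal).isClosed
  obtain ⟨δ, hδ, hdist⟩ := hK.exists_pos_forall_mem_ball_le_dist (z := z) (by
    rintro ⟨t, ht, rfl⟩
    exact hz t ht rfl)
  have hsep : ∀ w ∈ ball z δ, ∀ t ∈ uIcc a b, δ ≤ ‖(t : ℂ) - w‖ := fun w hw t ht => by
    simpa only [dist_eq_norm] using hdist w hw t ⟨t, ht, rfl⟩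
  have hne : ∀ w ∈ ball z δ, ∀ t ∈ uIcc a b, (t : ℂ) - w ≠ 0 := fun w hw t ht h => by
    linarith [(norm_eq_zero.2 h) ▸ hsep w hw t ht]
  have hz₀ : z ∈ ball z δ := mem_ball_self hδ
  refine (hasDerivAt_integral_of_dominated_loc_of_deriv_le
    (F := fun w t => f t / ((t : ℂ) - w)) (F' := fun w t => f t / ((t : ℂ) - w) ^ 2)
    (bound := fun t => ‖f t‖ / δ ^ 2) (ball_mem_nhds z hδ) ?_ ?_ ?_ ?_
    (hf.norm.div_const _) ?_).2
  · filter_upwards [ball_mem_nhds z hδ] with w hw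
    exact (hf.div_continuousOn (by fun_prop) (hne w hw)).def'.aestronglyMeasurable
  · exact hf.div_continuousOn (by fun_prop) (hne z hz₀)
  · exact (hf.div_continuousOn (by fun_prop)
      fun t ht => pow_ne_zero 2 (hne z hz₀ t ht)).def'.aestronglyMeasurable
  · refine ae_of_all _ fun t ht w hw => ?_
    rw [norm_div, norm_pow]
    gcongr
    exact hsep w hw t (uIoc_subset_uIcc ht)
  · refine ae_of_all _ fun t ht w hw => ?_
    have h := (((hasDerivAt_id w).const_sub (t : ℂ)).inv
      (hne w hw t (uIoc_subset_uIcc ht))).const_mul (f t)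
    simpa [div_eq_mul_inv] using h

/-- The derivative takes this form because `z(1-z) = (t-z)(t+z-1) + t(1-t)`. -/
theorem hasDerivAt_mul_one_sub_mul_div_ofReal_sub {f : ℝ → ℂ} {t : ℝ} {z : ℂ}
    (hf : DifferentiableAt ℝ f t) (ht : (t : ℂ) ≠ z) :
    HasDerivAt (fun s : ℝ => (↑(s * (1 - s)) : ℂ) * f s / ((s : ℂ) - z))
      (-f t + (↑(t * (1 - t)) : ℂ) * deriv f t / ((t : ℂ) - z)
        - z * (1 - z) * (f t / ((t : ℂ) - z) ^ 2)) t := by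
  have hq : HasDerivAt (fun s : ℝ => (↑(s * (1 - s)) : ℂ)) ↑(1 * (1 - t) + t * (0 - 1)) t :=
    ((hasDerivAt_id t).mul ((hasDerivAt_const t 1).sub (hasDerivAt_id t))).ofReal_comp
  have hd : HasDerivAt (fun s : ℝ => (s : ℂ) - z) 1 t :=
    ((hasDerivAt_id (t : ℂ)).sub_const z).comp_ofReal
  have hne := sub_ne_zero.2 ht
  have h : HasDerivAt (fun s : ℝ => (↑(s * (1 - s)) : ℂ) * f s / ((s : ℂ) - z)) _ t :=
    (hq.mul hf.hasDerivAt).div hd hne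
  convert h using 1
  simp only [Pi.mul_apply]
  push_cast
  field_simp
  ring

theorem tendsto_div_ofReal_sub_of_tendsto_zero {g : ℝ → ℂ} {l : Filter ℝ} {a : ℝ} {z : ℂ}
    (hl : l ≤ 𝓝 a) (ha : (a : ℂ) ≠ z) (hg : Tendsto g l (𝓝 0)) :
    Tendsto (fun t => g t / ((t : ℂ) - z)) l (𝓝 0) := by
  rw [← zero_div ((a : ℂ) - z)]
  exact hg.div ((Complex.continuous_ofReal.sub continuous_const).continuousAt.tendsto.mono_left hl)
    (sub_ne_zero.2 ha)

theorem stmt10_general (f : ℝ → ℂ)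
    (hfint : IntervalIntegrable f volume 0 1)
    (hfdiff : ∀ t ∈ Set.Ioo (0 : ℝ) 1, DifferentiableAt ℝ f t)
    (hlim0 : Filter.Tendsto (fun t : ℝ => (↑(t * (1 - t)) : ℂ) * f t)
      (nhdsWithin 0 (Set.Ioi 0)) (nhds 0))
    (hlim1 : Filter.Tendsto (fun t : ℝ => (↑(t * (1 - t)) : ℂ) * f t)
      (nhdsWithin 1 (Set.Iio 1)) (nhds 0))
    (hfint' : IntervalIntegrable (fun t : ℝ => (↑(t * (1 - t)) : ℂ) * deriv f t) volume 0 1)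
    (z : ℂ) (hz : ∀ t ∈ Set.Icc (0 : ℝ) 1, (t : ℂ) ≠ z) :
    z * (1 - z) * deriv (fun w : ℂ => ∫ t in (0 : ℝ)..1, f t / ((t : ℂ) - w)) z =
      -(∫ t in (0 : ℝ)..1, f t) +
        ∫ t in (0 : ℝ)..1, (↑(t * (1 - t)) : ℂ) * deriv f t / ((t : ℂ) - z) := by
  have hz' : ∀ t ∈ uIcc (0 : ℝ) 1, (t : ℂ) ≠ z := by rwa [uIcc_of_le zero_le_one]
  have hne : ∀ t ∈ uIcc (0 : ℝ) 1, (t : ℂ) - z ≠ 0 := fun t ht => sub_ne_zero.2 (hz' t ht)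
  have hint₀ : IntervalIntegrable (fun t => -f t) volume 0 1 := hfint.neg
  have hint₁ := hfint'.div_continuousOn (by fun_prop) hne
  have hint₂ := hfint.div_continuousOn (by fun_prop) fun t ht => pow_ne_zero 2 (hne t ht)
  have hFTC := integral_eq_sub_of_hasDerivAt_of_tendsto zero_lt_one
    (fun t ht => hasDerivAt_mul_one_sub_mul_div_ofReal_sub (hfdiff t ht)
      (hz t (Ioo_subset_Icc_self ht)))
    ((hint₀.add hint₁).sub (hint₂.const_mul (z * (1 - z))))
    (tendsto_div_ofReal_sub_of_tendsto_zero nhdsWithin_le_nhds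
      (hz 0 (left_mem_Icc.2 zero_le_one)) hlim0)
    (tendsto_div_ofReal_sub_of_tendsto_zero nhdsWithin_le_nhds
      (hz 1 (right_mem_Icc.2 zero_le_one)) hlim1)
  rw [integral_sub (hint₀.add hint₁) (hint₂.const_mul _), integral_add hint₀ hint₁,
    intervalIntegral.integral_neg, intervalIntegral.integral_const_mul] at hFTC
  rw [(hasDerivAt_integral_div_ofReal_sub hfint hz').deriv]
  linear_combination -hFTC

/-- For a continuous integrable `f` on `(0,1)` with `t(1-t)f(t) → 0` at both endpoints and
`t(1-t)f'(t)` integrable, the Cauchy transform `F(z) = ∫₀¹ f(t)/(t-z) dt` satisfies, for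
`z ∉ [0,1]`,  `z(1-z)F'(z) = −∫₀¹ f(t) dt + ∫₀¹ t(1-t)f'(t)/(t-z) dt`. -/
theorem stmt10 (f : ℝ → ℂ)
    (hfc : ContinuousOn f (Set.Ioo 0 1))
    (hfint : IntervalIntegrable f volume 0 1)
    (hfdiff : ∀ t ∈ Set.Ioo (0 : ℝ) 1, DifferentiableAt ℝ f t)
    (hlim0 : Filter.Tendsto (fun t : ℝ => (↑(t * (1 - t)) : ℂ) * f t)
      (nhdsWithin 0 (Set.Ioi 0)) (nhds 0))
    (hlim1 : Filter.Tendsto (fun t : ℝ => (↑(t * (1 - t)) : ℂ) * f t)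
      (nhdsWithin 1 (Set.Iio 1)) (nhds 0))
    (hfint' : IntervalIntegrable (fun t : ℝ => (↑(t * (1 - t)) : ℂ) * deriv f t) volume 0 1)
    (z : ℂ) (hz : ∀ t ∈ Set.Icc (0 : ℝ) 1, (t : ℂ) ≠ z) :
    z * (1 - z) * deriv (fun w : ℂ => ∫ t in (0 : ℝ)..1, f t / ((t : ℂ) - w)) z =
      -(∫ t in (0 : ℝ)..1, f t) +
        ∫ t in (0 : ℝ)..1, (↑(t * (1 - t)) : ℂ) * deriv f t / ((t : ℂ) - z) :=
  stmt10_general f hfint hfdiff hlim0 hlim1 hfint' z hz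
end
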